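/- arXiv:2204.08275 — 7 statements merged into one kernel-verified Lean document; each statement's English description precedes it below -/
import Mathlib

section
/- For every real number x with |x| < 2, the series ∑_{k=0}^∞ x^{2k} / C(2k,k) converges and (1/4)·∑_{k=0}^∞ x^{2k}/C(2k,k) = (√(4−x²) + x·arcsin(x/2)) / ((4−x²)·√(4−x²)). -/
/-!
Beta integral: `1 / C(2k, k) = (2k + 1) ∫₀¹ (t(1-t))^k dt`. Summing under the integral with
`u = x² t(1-t) ∈ [0, x²/4)` and `∑ (2k+1) u^k = (1+u)/(1-u)²`, the series equals
`∫₀¹ (1+u)/(1-u)² dt`. Since `4(1-u) = (4-x²) + x²(2t-1)²`, this rational integral has an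
elementary primitive whose transcendental part is `arctan (x(2t-1)/√(4-x²))`, and at `t = 1`
that arctan is `arcsin (x/2)`.
-/

open Real MeasureTheory intervalIntegral Nat

theorem integral_pow_mul_one_sub_pow (m n : ℕ) :
    ∫ t in (0 : ℝ)..1, t ^ m * (1 - t) ^ n = (m ! * n ! : ℝ) / (m + n + 1)! := by
  have hbeta := Complex.betaIntegral_eq_Gamma_mul_div (m + 1) (n + 1)
    (by norm_cast; omega) (by norm_cast; omega)
  rw [show (m + 1 : ℂ) + (n + 1) = ((m + n + 1 : ℕ) : ℂ) + 1 by push_cast; ring,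
    Complex.Gamma_nat_eq_factorial, Complex.Gamma_nat_eq_factorial,
    Complex.Gamma_nat_eq_factorial, Complex.betaIntegral] at hbeta
  simp only [add_sub_cancel_right, Complex.cpow_natCast] at hbeta
  apply Complex.ofReal_injective
  rw [← intervalIntegral.integral_ofReal]
  push_cast
  exact hbeta

theorem two_mul_add_one_mul_integral_mul_one_sub_pow (k : ℕ) :
    (2 * k + 1 : ℝ) * ∫ t in (0 : ℝ)..1, (t * (1 - t)) ^ k = 1 / (2 * k).choose k := by
  simp_rw [mul_pow, integral_pow_mul_one_sub_pow]
  rw [Nat.cast_choose ℝ (by omega : k ≤ 2 * k), show 2 * k - k = k by omega,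
    show k + k + 1 = 2 * k + 1 by omega, Nat.factorial_succ]
  push_cast
  field_simp

theorem hasSum_two_mul_add_one_mul_geometric {𝕜 : Type*} [NormedField 𝕜] {u : 𝕜}
    (hu : ‖u‖ < 1) : HasSum (fun k : ℕ => (2 * k + 1) * u ^ k) ((1 + u) / (1 - u) ^ 2) := by
  have hu1 : 1 - u ≠ 0 := sub_ne_zero.2 fun h => by simp [← h] at hu
  have hsum := ((hasSum_coe_mul_geometric_of_norm_lt_one hu).mul_left 2).add
    (hasSum_geometric_of_norm_lt_one hu)
  rw [show (1 + u) / (1 - u) ^ 2 = 2 * (u / (1 - u) ^ 2) + (1 - u)⁻¹ by field_simp; ring]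
  exact hsum.congr_fun fun k => by ring

theorem summable_pow_div_choose {x : ℝ} (hx : x ^ 2 < 4) :
    Summable fun k : ℕ => x ^ (2 * k) / (2 * k).choose k := by
  have hgeom := (hasSum_two_mul_add_one_mul_geometric (u := x ^ 2 / 4)
    (by rw [Real.norm_of_nonneg (by positivity)]; linarith)).summable
  refine hgeom.of_nonneg_of_le
    (fun k => div_nonneg ((even_two_mul k).pow_nonneg x) (Nat.cast_nonneg _)) fun k => ?_
  have hchoose : (0 : ℝ) < (2 * k).choose k := by
    exact_mod_cast Nat.choose_pos (by omega)
  have hcentral : (4 : ℝ) ^ k ≤ (2 * k + 1) * (2 * k).choose k := by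
    exact_mod_cast Nat.four_pow_le_two_mul_add_one_mul_central_binom k
  rw [pow_mul, div_pow, div_le_iff₀ hchoose, mul_div_assoc', div_mul_eq_mul_div,
    le_div_iff₀ (by positivity : (0 : ℝ) < 4 ^ k), mul_right_comm, mul_comm]
  exact mul_le_mul_of_nonneg_right hcentral (by positivity)

theorem one_sub_sq_mul_mul_one_sub_pos {x : ℝ} (hx : x ^ 2 < 4) (t : ℝ) :
    0 < 1 - x ^ 2 * (t * (1 - t)) := by
  nlinarith [mul_nonneg (sq_nonneg x) (sq_nonneg (2 * t - 1))]

theorem hasDerivAt_primitive_one_add_div_one_sub_sq {x r : ℝ} (hr : 0 < r)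
    (hr2 : r ^ 2 = 4 - x ^ 2) (t : ℝ) :
    HasDerivAt
      (fun t => (4 * t - 2) / (r ^ 2 * (1 - x ^ 2 * (t * (1 - t)))) +
        2 * x / r ^ 3 * arctan (x * (2 * t - 1) / r))
      ((1 + x ^ 2 * (t * (1 - t))) / (1 - x ^ 2 * (t * (1 - t))) ^ 2) t := by
  have hQ := one_sub_sq_mul_mul_one_sub_pos (x := x) (by nlinarith) t
  have hQr : 4 * (1 - x ^ 2 * (t * (1 - t))) = r ^ 2 + (x * (2 * t - 1)) ^ 2 := by
    linear_combination -hr2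
  have hlin : HasDerivAt (fun t : ℝ => 4 * t - 2) 4 t := by
    simpa using ((hasDerivAt_id t).const_mul 4).sub_const 2
  have hden : HasDerivAt (fun t : ℝ => r ^ 2 * (1 - x ^ 2 * (t * (1 - t))))
      (r ^ 2 * (x ^ 2 * (2 * t - 1))) t := by
    have := (((hasDerivAt_id t).mul ((hasDerivAt_id t).const_sub 1)).const_mul (x ^ 2)).const_sub 1
      |>.const_mul (r ^ 2)
    exact this.congr_deriv (by simp only [id]; ring)
  have harg : HasDerivAt (fun t : ℝ => x * (2 * t - 1) / r) (2 * x / r) t := by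
    have := ((((hasDerivAt_id t).const_mul 2).sub_const 1).const_mul x).div_const r
    exact this.congr_deriv (by ring)
  refine ((hlin.div hden (by positivity)).add
    (harg.arctan.const_mul (2 * x / r ^ 3))).congr_deriv ?_
  have hsq : 1 + (x * (2 * t - 1) / r) ^ 2 = 4 * (1 - x ^ 2 * (t * (1 - t))) / r ^ 2 := by
    rw [hQr]; field_simp
  rw [hsq, show 1 + x ^ 2 * (t * (1 - t)) = 2 - (1 - x ^ 2 * (t * (1 - t))) by ring]
  generalize 1 - x ^ 2 * (t * (1 - t)) = Q at hQ hQr ⊢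
  field_simp
  linear_combination 8 * hQr + 4 * Q * hr2

theorem arctan_div_sqrt_four_sub_sq {x : ℝ} (hx : x ^ 2 < 4) :
    arctan (x / √(4 - x ^ 2)) = arcsin (x / 2) := by
  have hsqrt : √(1 - (x / 2) ^ 2) = √(4 - x ^ 2) / 2 := by
    rw [show 1 - (x / 2) ^ 2 = (4 - x ^ 2) / 2 ^ 2 by ring, sqrt_div' _ (by positivity),
      sqrt_sq zero_le_two]
  rw [arcsin_eq_arctan ⟨by nlinarith, by nlinarith⟩, hsqrt, div_div_div_cancel_right₀ two_ne_zero]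

theorem integral_one_add_div_one_sub_sq {x : ℝ} (hx : x ^ 2 < 4) :
    ∫ t in (0 : ℝ)..1, (1 + x ^ 2 * (t * (1 - t))) / (1 - x ^ 2 * (t * (1 - t))) ^ 2 =
      4 / (4 - x ^ 2) + 4 * x * arcsin (x / 2) / ((4 - x ^ 2) * √(4 - x ^ 2)) := by
  have hr : 0 < √(4 - x ^ 2) := sqrt_pos.2 (by linarith)
  have hr2 : √(4 - x ^ 2) ^ 2 = 4 - x ^ 2 := sq_sqrt (by linarith)
  have hcont : Continuous fun t : ℝ =>
      (1 + x ^ 2 * (t * (1 - t))) / (1 - x ^ 2 * (t * (1 - t))) ^ 2 := by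
    fun_prop (disch := exact fun t => pow_ne_zero 2 (one_sub_sq_mul_mul_one_sub_pos hx t).ne')
  rw [integral_eq_sub_of_hasDerivAt
    (fun t _ => hasDerivAt_primitive_one_add_div_one_sub_sq hr hr2 t)
    (hcont.intervalIntegrable 0 1)]
  norm_num [neg_div, arctan_neg, arctan_div_sqrt_four_sub_sq hx]
  generalize √(4 - x ^ 2) = r at hr hr2 ⊢
  rw [← hr2]
  field_simp
  ring

theorem hasSum_pow_div_choose {x : ℝ} (hx : x ^ 2 < 4) :
    HasSum (fun k : ℕ => x ^ (2 * k) / (2 * k).choose k)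
      (∫ t in (0 : ℝ)..1, (1 + x ^ 2 * (t * (1 - t))) / (1 - x ^ 2 * (t * (1 - t))) ^ 2) := by
  set F : ℕ → ℝ → ℝ := fun k t => (2 * k + 1) * (x ^ 2 * (t * (1 - t))) ^ k
  have hu_nonneg : ∀ t ∈ Set.Ioc (0 : ℝ) 1, 0 ≤ x ^ 2 * (t * (1 - t)) := fun t ht =>
    mul_nonneg (sq_nonneg x) (mul_nonneg ht.1.le (sub_nonneg.2 ht.2))
  have hF_nonneg : ∀ k, ∀ t ∈ Set.Ioc (0 : ℝ) 1, 0 ≤ F k t := fun k t ht =>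
    mul_nonneg (by positivity) (pow_nonneg (hu_nonneg t ht) k)
  have hF_integral : ∀ k, ∫ t in Set.Ioc (0 : ℝ) 1, F k t = x ^ (2 * k) / (2 * k).choose k := by
    intro k
    rw [← integral_of_le zero_le_one, pow_mul, div_eq_mul_one_div,
      ← two_mul_add_one_mul_integral_mul_one_sub_pow, ← intervalIntegral.integral_const_mul,
      ← intervalIntegral.integral_const_mul]
    congr 1 with t
    simp only [F, mul_pow]
    ring
  have hF_tsum : ∀ t ∈ Set.Ioc (0 : ℝ) 1,
      ∑' k, F k t = (1 + x ^ 2 * (t * (1 - t))) / (1 - x ^ 2 * (t * (1 - t))) ^ 2 := by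
    intro t ht
    refine (hasSum_two_mul_add_one_mul_geometric ?_).tsum_eq
    rw [norm_of_nonneg (hu_nonneg t ht)]
    linarith [one_sub_sq_mul_mul_one_sub_pos hx t]
  have hsum := hasSum_integral_of_summable_integral_norm (μ := volume.restrict (Set.Ioc 0 1))
    (F := F) (fun k => (by fun_prop : Continuous (F k)).integrableOn_Ioc) ?_
  · rw [integral_of_le zero_le_one, ← setIntegral_congr_fun measurableSet_Ioc hF_tsum]
    simpa only [hF_integral] using hsum
  · refine (summable_pow_div_choose hx).congr fun k => ?_
    rw [← hF_integral, setIntegral_congr_fun measurableSet_Ioc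
      fun t ht => norm_of_nonneg (hF_nonneg k t ht)]

theorem stmt_0 (x : ℝ) (hx : |x| < 2) :
    Summable (fun k : ℕ => x ^ (2 * k) / (Nat.choose (2 * k) k : ℝ)) ∧
    (1 / 4) * ∑' k : ℕ, x ^ (2 * k) / (Nat.choose (2 * k) k : ℝ) =
      (Real.sqrt (4 - x ^ 2) + x * Real.arcsin (x / 2)) /
        ((4 - x ^ 2) * Real.sqrt (4 - x ^ 2)) := by
  have hx2 : x ^ 2 < 4 := by nlinarith [sq_abs x, abs_nonneg x]
  refine ⟨summable_pow_div_choose hx2, ?_⟩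
  rw [(hasSum_pow_div_choose hx2).tsum_eq, integral_one_add_div_one_sub_sq hx2]
  have hr : 0 < √(4 - x ^ 2) := sqrt_pos.2 (by linarith)
  have hr2 : √(4 - x ^ 2) ^ 2 = 4 - x ^ 2 := sq_sqrt (by linarith)
  generalize √(4 - x ^ 2) = r at hr hr2 ⊢
  rw [← hr2]
  field_simp
end

section
/- For every real number x with |x| < 2, (1/4)·∑_{k=0}^∞ (−1)^k x^{2k}/C(2k,k) = 1/(4+x²) − x·arcsinh(x/2)/((4+x²)·√(4+x²)), where arcsinh t = log(t + √(t²+1)). -/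
/-!
Let `S y = ∑ (-1)ᵏ yᵏ / C(2k,k)`. The recursion `(k+1) C(2k+2,k+1) = 2(2k+1) C(2k,k)` makes
the power series of `y(4+y) S'(y) + (y-2) S(y)` telescope to `-2`. Consequently
`G x = (4+x²)^{3/2} S(x²)/4` satisfies `x G' - G = -√(4+x²)`, and so does
`√(4+x²) - x arsinh(x/2)`, whose derivative is `-arsinh(x/2)`. Their difference `V` is even and
satisfies `x V' = V`, so `V x / x` is constant on `(0, 2)`; that constant is `V'(0)`, which
vanishes because `V` is even.
-/

open Real Set

theorem Nat.inv_centralBinom_le (n : ℕ) : ((n.centralBinom : ℝ))⁻¹ ≤ (2 * n + 1) / 4 ^ n := by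
  rw [inv_le_comm₀ (by exact_mod_cast n.centralBinom_pos) (by positivity), inv_div,
    div_le_iff₀ (by positivity), mul_comm]
  exact_mod_cast Nat.four_pow_le_two_mul_add_one_mul_central_binom n

theorem hasSum_sub_succ {G : Type*} [AddCommGroup G] [TopologicalSpace G] [IsTopologicalAddGroup G]
    {g : ℕ → G} (hg : Summable g) : HasSum (fun n ↦ g n - g (n + 1)) (g 0) := by
  simpa using hg.hasSum.sub ((hasSum_nat_add_iff' 1).2 hg.hasSum)

theorem Function.Even.deriv_zero {F : Type*} [NormedAddCommGroup F] [NormedSpace ℝ F]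
    {f : ℝ → F} (hf : f.Even) : deriv f 0 = 0 := by
  have h := deriv_comp_neg f 0
  rw [show (fun x ↦ f (-x)) = f from funext hf, neg_zero] at h
  have h2 : (2 : ℝ) • deriv f 0 = 0 := by
    rw [two_smul]
    nth_rewrite 2 [h]
    exact add_neg_cancel _
  exact (smul_eq_zero.1 h2).resolve_left two_ne_zero

open Filter Topology in
theorem Function.Even.eqOn_zero_of_mul_deriv_eq_self {V : ℝ → ℝ} {r : ℝ} (heven : V.Even)
    (hdiff : ∀ x ∈ Ioo (-r) r, DifferentiableAt ℝ V x)
    (hode : ∀ x ∈ Ioo (-r) r, x * deriv V x = V x) : EqOn V 0 (Ioo (-r) r) := by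
  have hdiff_pos : ∀ t ∈ Ioo 0 r, DifferentiableAt ℝ V t := fun t ht ↦
    hdiff t ⟨by linarith [ht.1, ht.2], ht.2⟩
  obtain ⟨c, hc⟩ : ∃ c, ∀ t ∈ Ioo 0 r, V t / t = c := by
    refine isOpen_Ioo.exists_is_const_of_deriv_eq_zero isPreconnected_Ioo
      (fun t ht ↦
        ((hdiff_pos t ht).fun_div differentiableAt_fun_id ht.1.ne').differentiableWithinAt)
      fun t ht ↦ ?_
    rw [deriv_fun_div (hdiff_pos t ht) differentiableAt_fun_id ht.1.ne', deriv_id'', mul_one,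
      mul_comm, hode t ⟨by linarith [ht.1, ht.2], ht.2⟩, sub_self, zero_div, Pi.zero_apply]
  intro x hx
  have hr : 0 < r := by linarith [hx.1, hx.2]
  have hV0 : V 0 = 0 := by simpa using (hode 0 ⟨neg_lt_zero.2 hr, hr⟩).symm
  have hc0 : c = 0 := by
    have hderiv := (hdiff 0 ⟨neg_lt_zero.2 hr, hr⟩).hasDerivAt
    rw [heven.deriv_zero, hasDerivAt_iff_tendsto_slope] at hderiv
    have hslope : slope V 0 =ᶠ[𝓝[>] 0] fun _ ↦ c := by
      filter_upwards [Ioo_mem_nhdsGT hr] with t ht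
      rw [slope_def_field, hV0, sub_zero, sub_zero, hc t ht]
    exact tendsto_nhds_unique (tendsto_const_nhds.congr' hslope.symm)
      (hderiv.mono_left (nhdsWithin_mono 0 fun t ht ↦ ne_of_gt ht))
  have hpos : ∀ t ∈ Ioo 0 r, V t = 0 := fun t ht ↦ by
    simpa [hc0, ht.1.ne'] using hc t ht
  rcases lt_trichotomy x 0 with hneg | rfl | hpos'
  · rw [Pi.zero_apply, ← heven]
    exact hpos (-x) ⟨neg_pos.2 hneg, by linarith [hx.1]⟩
  · exact hV0
  · exact hpos x ⟨hpos', hx.2⟩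

section PowerSeries

variable {c : ℕ → ℝ} {r : ℝ}

theorem norm_mul_mul_pow_pred_le {z : ℝ} (hz : |z| ≤ r) (n : ℕ) :
    ‖c n * n * z ^ (n - 1)‖ ≤ |c n| * n * r ^ (n - 1) := by
  rw [norm_mul, norm_mul, norm_pow, Real.norm_eq_abs, Real.norm_natCast, Real.norm_eq_abs]
  gcongr

theorem hasDerivAt_tsum_mul_pow (hc : Summable fun n ↦ |c n| * n * r ^ (n - 1)) {y : ℝ}
    (hy : |y| < r) :
    HasDerivAt (fun z ↦ ∑' n, c n * z ^ n) (∑' n, c n * n * y ^ (n - 1)) y := by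
  have hr : 0 < r := (abs_nonneg y).trans_lt hy
  refine hasDerivAt_tsum_of_isPreconnected hc isOpen_Ioo isPreconnected_Ioo
    (fun n z _ ↦ ?_) (fun n z hz ↦ norm_mul_mul_pow_pred_le (abs_le.2 ⟨hz.1.le, hz.2.le⟩) n)
    (y₀ := 0) ⟨neg_lt_zero.2 hr, hr⟩ ?_ (abs_lt.1 hy)
  · simpa only [mul_assoc] using (hasDerivAt_pow n z).const_mul (c n)
  · exact summable_of_ne_finset_zero (s := {0}) fun n hn ↦ by
      simp [zero_pow (Finset.mem_singleton.not.1 hn)]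

theorem summable_mul_pow_of_summable_deriv (hc : Summable fun n ↦ |c n| * n * r ^ (n - 1))
    {y : ℝ} (hy : |y| < r) : Summable fun n ↦ c n * y ^ n := by
  have hr : 0 < r := (abs_nonneg y).trans_lt hy
  refine summable_of_summable_hasDerivAt_of_isPreconnected (g := fun n z ↦ c n * z ^ n)
    (g' := fun n z ↦ c n * n * z ^ (n - 1)) hc isOpen_Ioo isPreconnected_Ioo (fun n z _ ↦ ?_)
    (fun n z hz ↦ norm_mul_mul_pow_pred_le (abs_le.2 ⟨hz.1.le, hz.2.le⟩) n)
    (y₀ := 0) ⟨neg_lt_zero.2 hr, hr⟩ ?_ (abs_lt.1 hy)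
  · simpa only [mul_assoc] using (hasDerivAt_pow n z).const_mul (c n)
  · exact summable_of_ne_finset_zero (s := {0}) fun n hn ↦ by
      simp [zero_pow (Finset.mem_singleton.not.1 hn)]

end PowerSeries

theorem mul_natCast_mul_pow_pred (y : ℝ) (n : ℕ) : y * (n * y ^ (n - 1)) = n * y ^ n := by
  cases n with
  | zero => simp
  | succ n => rw [Nat.add_sub_cancel, pow_succ]; push_cast; ring

noncomputable def altInvCentralBinom (n : ℕ) : ℝ := (-1) ^ n / n.centralBinom

theorem altInvCentralBinom_zero : altInvCentralBinom 0 = 1 := by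
  simp [altInvCentralBinom]

theorem abs_altInvCentralBinom_le (n : ℕ) : |altInvCentralBinom n| ≤ (2 * n + 1) / 4 ^ n := by
  simpa [altInvCentralBinom, abs_div] using Nat.inv_centralBinom_le n

theorem altInvCentralBinom_succ (n : ℕ) :
    altInvCentralBinom (n + 1) = -((n + 1) / (2 * (2 * n + 1))) * altInvCentralBinom n := by
  have h : ((n + 1).centralBinom : ℝ) = 2 * (2 * n + 1) * n.centralBinom / (n + 1) := by
    rw [eq_div_iff (by positivity), mul_comm]
    exact_mod_cast Nat.succ_mul_centralBinom_succ n
  have h₀ : (n.centralBinom : ℝ) ≠ 0 := by exact_mod_cast n.centralBinom_ne_zero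
  rw [altInvCentralBinom, altInvCentralBinom, h]
  field_simp
  ring

theorem summable_abs_altInvCentralBinom_mul {r : ℝ} (hr₀ : 0 ≤ r) (hr : r < 4) :
    Summable fun n ↦ |altInvCentralBinom n| * n * r ^ (n - 1) := by
  rw [← summable_nat_add_iff 1]
  have hq : ‖r / 4‖ < 1 := by
    rw [Real.norm_eq_abs, abs_of_nonneg (by positivity)]; linarith
  refine .of_nonneg_of_le (fun n ↦ by positivity) (fun n ↦ ?_)
    ((summable_descFactorial_mul_geometric_of_norm_lt_one 2 hq).mul_left (1 / 2))
  have hdesc : (((n + 2).descFactorial 2 : ℕ) : ℝ) = (n + 2) * (n + 1) := by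
    simp [Nat.descFactorial]; ring
  rw [hdesc, Nat.add_sub_cancel]
  calc |altInvCentralBinom (n + 1)| * ↑(n + 1) * r ^ n
      ≤ (2 * (n + 1 : ℕ) + 1) / 4 ^ (n + 1) * ↑(n + 1) * r ^ n := by
        gcongr; exact abs_altInvCentralBinom_le _
    _ = (2 * n + 3) * (n + 1) / 4 * (r / 4) ^ n := by
        rw [div_pow]; push_cast; field_simp; ring
    _ ≤ 1 / 2 * ((n + 2) * (n + 1) * (r / 4) ^ n) := by
        have := pow_nonneg (div_nonneg hr₀ zero_le_four) n
        nlinarith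

noncomputable def altInvCentralBinomSeries (y : ℝ) : ℝ := ∑' n, altInvCentralBinom n * y ^ n

theorem hasDerivAt_altInvCentralBinomSeries {y : ℝ} (hy : |y| < 4) :
    HasDerivAt altInvCentralBinomSeries (∑' n, altInvCentralBinom n * n * y ^ (n - 1)) y :=
  hasDerivAt_tsum_mul_pow
    (summable_abs_altInvCentralBinom_mul (r := (|y| + 4) / 2) (by positivity) (by linarith))
    (by linarith)

theorem altInvCentralBinomSeries_ode {y : ℝ} (hy : |y| < 4) :
    y * (4 + y) * deriv altInvCentralBinomSeries y + (y - 2) * altInvCentralBinomSeries y = -2 := by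
  set a := altInvCentralBinom
  have hyr : |y| < (|y| + 4) / 2 := by linarith
  have hc := summable_abs_altInvCentralBinom_mul (by positivity) (by linarith : (|y| + 4) / 2 < 4)
  have hS : HasSum (fun n ↦ a n * y ^ n) (altInvCentralBinomSeries y) :=
    (summable_mul_pow_of_summable_deriv hc hyr).hasSum
  have hD : HasSum (fun n ↦ a n * n * y ^ (n - 1)) (deriv altInvCentralBinomSeries y) := by
    rw [(hasDerivAt_altInvCentralBinomSeries hy).deriv]
    exact (Summable.of_norm_bounded hc (norm_mul_mul_pow_pred_le hyr.le)).hasSum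
  set g : ℕ → ℝ := fun n ↦ 2 * (2 * n - 1) * a n * y ^ n
  have hg : Summable g := by
    refine ((hD.summable.mul_left (4 * y)).sub (hS.summable.mul_left 2)).congr fun n ↦ ?_
    linear_combination (4 * a n) * mul_natCast_mul_pow_pred y n
  have hterm : ∀ n, y * (4 + y) * (a n * n * y ^ (n - 1)) + (y - 2) * (a n * y ^ n) =
      g n - g (n + 1) := fun n ↦ by
    rw [show y * (4 + y) * (a n * n * y ^ (n - 1)) = (4 + y) * a n * (y * (n * y ^ (n - 1))) by
      ring, mul_natCast_mul_pow_pred]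
    simp only [g, a, altInvCentralBinom_succ]
    push_cast
    field_simp
    ring
  have hsum := (hD.mul_left (y * (4 + y))).add (hS.mul_left (y - 2))
  simp only [hterm] at hsum
  simpa [g, a, altInvCentralBinom_zero] using hsum.unique (hasSum_sub_succ hg)

noncomputable def scaledSeries (x : ℝ) : ℝ :=
  √(4 + x ^ 2) ^ 3 * altInvCentralBinomSeries (x ^ 2) / 4

noncomputable def scaledClosedForm (x : ℝ) : ℝ := √(4 + x ^ 2) - x * arsinh (x / 2)

theorem scaledSeries_even : scaledSeries.Even := fun x ↦ by
  simp only [scaledSeries, neg_sq]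

theorem scaledClosedForm_even : scaledClosedForm.Even := fun x ↦ by
  simp only [scaledClosedForm, neg_sq, neg_div, arsinh_neg, neg_mul_neg]

theorem hasDerivAt_sqrt_four_add_sq (x : ℝ) :
    HasDerivAt (fun x ↦ √(4 + x ^ 2)) (x / √(4 + x ^ 2)) x := by
  have h := ((hasDerivAt_pow 2 x).const_add 4).sqrt (by positivity)
  convert h using 1
  norm_num [mul_div_mul_left]

theorem hasDerivAt_scaledClosedForm (x : ℝ) :
    HasDerivAt scaledClosedForm (-arsinh (x / 2)) x := by
  have hs : √(1 + (x / 2) ^ 2) = √(4 + x ^ 2) / 2 := by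
    rw [show 1 + (x / 2) ^ 2 = (4 + x ^ 2) / 2 ^ 2 by ring, sqrt_div' _ (by positivity),
      sqrt_sq (by norm_num)]
  have harsinh : HasDerivAt (fun x ↦ arsinh (x / 2)) (1 / √(4 + x ^ 2)) x := by
    refine ((hasDerivAt_arsinh (x / 2)).comp x ((hasDerivAt_id x).div_const 2)).congr_deriv ?_
    rw [hs]
    field_simp
  refine ((hasDerivAt_sqrt_four_add_sq x).sub ((hasDerivAt_id' x).mul harsinh)).congr_deriv ?_
  have : 0 < √(4 + x ^ 2) := by positivity
  field_simp
  ring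

theorem mul_deriv_scaledClosedForm_sub (x : ℝ) :
    x * deriv scaledClosedForm x - scaledClosedForm x = -√(4 + x ^ 2) := by
  rw [(hasDerivAt_scaledClosedForm x).deriv, scaledClosedForm]
  ring

theorem abs_sq_lt_four {x : ℝ} (hx : |x| < 2) : |x ^ 2| < 4 := by
  rw [abs_pow]
  nlinarith [abs_nonneg x]

theorem hasDerivAt_scaledSeries {x : ℝ} (hx : |x| < 2) :
    HasDerivAt scaledSeries
      ((3 * x * √(4 + x ^ 2) * altInvCentralBinomSeries (x ^ 2) +
        2 * x * √(4 + x ^ 2) ^ 3 * deriv altInvCentralBinomSeries (x ^ 2)) / 4) x := by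
  have hS := ((hasDerivAt_altInvCentralBinomSeries (abs_sq_lt_four hx)).differentiableAt
    |>.hasDerivAt).comp (h := fun x ↦ x ^ 2) x (hasDerivAt_pow 2 x)
  refine ((((hasDerivAt_sqrt_four_add_sq x).pow 3).mul hS).div_const 4).congr_deriv ?_
  have : 0 < √(4 + x ^ 2) := by positivity
  field_simp
  simp only [Pi.pow_apply, Function.comp_apply]
  push_cast
  ring

theorem mul_deriv_scaledSeries_sub {x : ℝ} (hx : |x| < 2) :
    x * deriv scaledSeries x - scaledSeries x = -√(4 + x ^ 2) := by
  have hode := altInvCentralBinomSeries_ode (abs_sq_lt_four hx)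
  have hs : √(4 + x ^ 2) ^ 2 = 4 + x ^ 2 := sq_sqrt (by positivity)
  rw [(hasDerivAt_scaledSeries hx).deriv, scaledSeries]
  linear_combination √(4 + x ^ 2) / 2 * hode + √(4 + x ^ 2) / 4 *
    (2 * x ^ 2 * deriv altInvCentralBinomSeries (x ^ 2) - altInvCentralBinomSeries (x ^ 2)) * hs

theorem scaledSeries_eq_scaledClosedForm {x : ℝ} (hx : |x| < 2) :
    scaledSeries x = scaledClosedForm x := by
  have hderiv : ∀ t ∈ Ioo (-2) 2, HasDerivAt (fun t ↦ scaledSeries t - scaledClosedForm t)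
      (deriv scaledSeries t - deriv scaledClosedForm t) t := fun t ht ↦
    (hasDerivAt_scaledSeries (abs_lt.2 ht)).differentiableAt.hasDerivAt.sub
      (hasDerivAt_scaledClosedForm t).differentiableAt.hasDerivAt
  have hzero := Function.Even.eqOn_zero_of_mul_deriv_eq_self
    (fun t ↦ by simp only [scaledSeries_even t, scaledClosedForm_even t])
    (fun t ht ↦ (hderiv t ht).differentiableAt)
    (fun t ht ↦ by
      rw [(hderiv t ht).deriv]
      linear_combination mul_deriv_scaledSeries_sub (abs_lt.2 ht) -
        mul_deriv_scaledClosedForm_sub t)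
    (abs_lt.1 hx)
  exact sub_eq_zero.1 hzero

theorem stmt_1 (x : ℝ) (hx : |x| < 2) :
    (1 / 4) * ∑' k : ℕ, (-1 : ℝ) ^ k * x ^ (2 * k) / (Nat.choose (2 * k) k : ℝ) =
      1 / (4 + x ^ 2) -
        x * Real.log (x / 2 + Real.sqrt ((x / 2) ^ 2 + 1)) /
          ((4 + x ^ 2) * Real.sqrt (4 + x ^ 2)) := by
  have hseries : ∑' k : ℕ, (-1 : ℝ) ^ k * x ^ (2 * k) / (Nat.choose (2 * k) k : ℝ) =
      altInvCentralBinomSeries (x ^ 2) := by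
    simp only [altInvCentralBinomSeries, altInvCentralBinom, Nat.centralBinom, pow_mul,
      div_mul_eq_mul_div]
  have hlog : Real.log (x / 2 + Real.sqrt ((x / 2) ^ 2 + 1)) = arsinh (x / 2) := by
    rw [arsinh, add_comm ((x / 2) ^ 2)]
  have h := scaledSeries_eq_scaledClosedForm hx
  rw [scaledSeries, scaledClosedForm] at h
  rw [hseries, hlog]
  set s := √(4 + x ^ 2)
  have hs : s ^ 2 = 4 + x ^ 2 := sq_sqrt (by positivity)
  have : 0 < s := by positivity
  calc 1 / 4 * altInvCentralBinomSeries (x ^ 2)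
      = s ^ 3 * altInvCentralBinomSeries (x ^ 2) / 4 / s ^ 3 := by field_simp
    _ = (s - x * arsinh (x / 2)) / s ^ 3 := by rw [h]
    _ = 1 / s ^ 2 - x * arsinh (x / 2) / (s ^ 2 * s) := by field_simp
    _ = _ := by rw [hs]
end

section
/- If n is a real number with n < −(1+√2)/2 or n > (√2−1)/2, then ∑_{k=0}^∞ (2(2n+1)²k + 3)/((−n(n+1))^k · C(2k,k)) = −(2n(n+1)/(2n+1))·log(1 + 1/n). -/
/-!
Put `p = n(n+1)`; the hypothesis says `p > 1/4`, so `x = -1/p` satisfies `|x| < 4`.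
The Beta integral `∫₀¹ (t(1-t))^k dt = 1/((2k+1) C(2k,k))` turns `∑ x^k / ((2k+1) C(2k,k))` into
`∫₀¹ dt / (1 - x t(1-t)) = p ∫₀¹ dt / ((n+t)(n+1-t))`, an elementary logarithm.
By `(k+1) C(2k+2,k+1) = 2(2k+1) C(2k,k)`, `x` times the sum of the given series and that one telescopes in
`k x^k / C(2k,k)`, a summable sequence vanishing at `k = 0`.
-/

open Real Nat MeasureTheory Interval

theorem integral_mul_one_sub_pow (k : ℕ) :
    ∫ t in (0 : ℝ)..1, (t * (1 - t)) ^ k = ((2 * k + 1) * centralBinom k : ℝ)⁻¹ := by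
  have hk : (0 : ℝ) < ((k : ℂ) + 1).re := by simp; positivity
  have hbeta := Complex.betaIntegral_eq_Gamma_mul_div _ _ hk hk
  rw [show (k : ℂ) + 1 + (k + 1) = ((2 * k + 1 : ℕ) : ℂ) + 1 by push_cast; ring,
    Complex.Gamma_nat_eq_factorial, Complex.Gamma_nat_eq_factorial, Complex.betaIntegral] at hbeta
  simp only [add_sub_cancel_right, Complex.cpow_natCast, ← mul_pow] at hbeta
  norm_cast at hbeta
  rw [intervalIntegral.integral_ofReal] at hbeta
  have hfact : (2 * k + 1)! = (2 * k + 1) * centralBinom k * (k ! * k !) := by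
    rw [Nat.factorial_succ, centralBinom_eq_two_mul_choose, mul_assoc, ← mul_assoc _ k !,
      ← Nat.choose_mul_factorial_mul_factorial (by omega : k ≤ 2 * k),
      show 2 * k - k = k by omega]
  rw [hfact] at hbeta
  push_cast at hbeta
  rw [div_mul_cancel_right₀ (by simp [Nat.factorial_ne_zero])] at hbeta
  rw [← Complex.ofReal_inj, hbeta]
  push_cast
  rfl

theorem abs_mul_mul_one_sub_le (x : ℝ) {t : ℝ} (ht : t ∈ Set.Icc (0 : ℝ) 1) :
    |x * (t * (1 - t))| ≤ |x| / 4 := by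
  have h0 : 0 ≤ t * (1 - t) := mul_nonneg ht.1 (by linarith [ht.2])
  rw [abs_mul, abs_of_nonneg h0]
  nlinarith [abs_nonneg x, sq_nonneg (t - 1 / 2)]

theorem hasSum_pow_div_two_mul_add_one_mul_centralBinom {x : ℝ} (hx : |x| < 4) :
    HasSum (fun k : ℕ => x ^ k / ((2 * k + 1) * centralBinom k))
      (∫ t in (0 : ℝ)..1, (1 - x * (t * (1 - t)))⁻¹) := by
  have hr : |x| / 4 < 1 := by linarith
  have hbound (t : ℝ) (ht : t ∈ Ι (0 : ℝ) 1) : ‖x * (t * (1 - t))‖ ≤ |x| / 4 := by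
    rw [Set.uIoc_of_le zero_le_one] at ht
    exact abs_mul_mul_one_sub_le x (Set.Ioc_subset_Icc_self ht)
  have := intervalIntegral.hasSum_integral_of_dominated_convergence
    (μ := volume) (F := fun (k : ℕ) t => (x * (t * (1 - t))) ^ k) (fun k _ => (|x| / 4) ^ k)
    (fun k => by fun_prop)
    (fun k => ae_of_all _ fun t ht => by
      rw [norm_pow]; exact pow_le_pow_left₀ (norm_nonneg _) (hbound t ht) k)
    (ae_of_all _ fun t _ => summable_geometric_of_lt_one (by positivity) hr)
    intervalIntegrable_const
    (ae_of_all _ fun t ht => hasSum_geometric_of_norm_lt_one ((hbound t ht).trans_lt hr))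
  refine this.congr_fun fun k => ?_
  simp only [mul_pow x]
  rw [intervalIntegral.integral_const_mul, integral_mul_one_sub_pow, div_eq_mul_inv]

theorem abs_pow_div_centralBinom_le (x : ℝ) (k : ℕ) :
    |x| ^ k / centralBinom k ≤ (2 * k + 1) * (|x| / 4) ^ k := by
  have h4 : (4 : ℝ) ^ k ≤ (2 * k + 1) * centralBinom k := by
    exact_mod_cast four_pow_le_two_mul_add_one_mul_central_binom k
  have hC : (0 : ℝ) < centralBinom k := by exact_mod_cast centralBinom_pos k
  rw [div_le_iff₀ hC, div_pow]
  calc |x| ^ k = |x| ^ k / 4 ^ k * 4 ^ k := by field_simp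
    _ ≤ |x| ^ k / 4 ^ k * ((2 * k + 1) * centralBinom k) := by gcongr
    _ = _ := by ring

theorem summable_pow_mul_pow_div_centralBinom (m : ℕ) {x : ℝ} (hx : |x| < 4) :
    Summable (fun k : ℕ => (k : ℝ) ^ m * x ^ k / centralBinom k) := by
  have hr : ‖|x| / 4‖ < 1 := by rw [norm_div, Real.norm_eq_abs, abs_abs]; norm_num; linarith
  refine Summable.of_norm_bounded
    (((summable_pow_mul_geometric_of_norm_lt_one (m + 1) hr).mul_left 2).add
      (summable_pow_mul_geometric_of_norm_lt_one m hr)) fun k => ?_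
  rw [Real.norm_eq_abs, abs_div, abs_mul, abs_pow, abs_pow, Nat.abs_cast, Nat.abs_cast, mul_div_assoc]
  calc (k : ℝ) ^ m * (|x| ^ k / centralBinom k) ≤ (k : ℝ) ^ m * ((2 * k + 1) * (|x| / 4) ^ k) :=
        mul_le_mul_of_nonneg_left (abs_pow_div_centralBinom_le x k) (by positivity)
    _ = _ := by ring

theorem centralBinom_telescoping (x : ℝ) (k : ℕ) :
    (2 * (x - 4) * k + 3 * x) * x ^ k / centralBinom k + x * (x ^ k / ((2 * k + 1) * centralBinom k))
      = 8 * ((k + 1) * x ^ (k + 1) / centralBinom (k + 1) - k * x ^ k / centralBinom k) := by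
  have hrec : (centralBinom (k + 1) : ℝ) = 2 * (2 * k + 1) * centralBinom k / (k + 1) := by
    rw [eq_div_iff (by positivity)]
    exact_mod_cast (mul_comm _ _).trans (succ_mul_centralBinom_succ k)
  have hC : (centralBinom k : ℝ) ≠ 0 := by exact_mod_cast centralBinom_ne_zero k
  rw [hrec]
  field_simp
  ring

theorem hasSum_centralBinom_series {x : ℝ} (hx : |x| < 4) :
    HasSum (fun k : ℕ => (2 * (x - 4) * k + 3 * x) * x ^ k / centralBinom k)
      (-x * ∫ t in (0 : ℝ)..1, (1 - x * (t * (1 - t)))⁻¹) := by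
  set a : ℕ → ℝ := fun k => k * x ^ k / centralBinom k
  have ha : HasSum a (∑' k, a k) := by
    simpa [a] using (summable_pow_mul_pow_div_centralBinom 1 hx).hasSum
  have ha_succ : HasSum (fun k => a (k + 1)) (∑' k, a k - a 0) := by
    simpa using (hasSum_nat_add_iff' 1).mpr ha
  have htele := ((ha_succ.sub ha).mul_left 8).sub
    ((hasSum_pow_div_two_mul_add_one_mul_centralBinom hx).mul_left x)
  have ha0 : a 0 = 0 := by simp [a]
  rw [ha0, sub_zero, sub_self, mul_zero, zero_sub, ← neg_mul] at htele
  refine htele.congr_fun fun k => ?_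
  rw [eq_sub_iff_add_eq, centralBinom_telescoping]
  push_cast [a]
  ring

theorem integral_inv_mul_add_sub {n : ℝ} (hn : 0 < n * (n + 1)) :
    ∫ t in (0 : ℝ)..1, ((n + t) * (n + 1 - t))⁻¹ = 2 / (2 * n + 1) * log (1 + 1 / n) := by
  have hn0 : n ≠ 0 := by rintro rfl; simp at hn
  have hn1 : n + 1 ≠ 0 := by intro h; rw [h, mul_zero] at hn; exact hn.false
  have h2n : 2 * n + 1 ≠ 0 := by intro h; nlinarith
  have hpos (t) (ht : t ∈ [[(0 : ℝ), 1]]) : 0 < (n + t) * (n + 1 - t) := by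
    rw [Set.uIcc_of_le zero_le_one] at ht
    nlinarith [ht.1, ht.2]
  have hderiv (t) (ht : t ∈ [[(0 : ℝ), 1]]) :
      HasDerivAt (fun t => (log (n + t) - log (n + 1 - t)) / (2 * n + 1))
        ((n + t) * (n + 1 - t))⁻¹ t := by
    have h₁ : n + t ≠ 0 := left_ne_zero_of_mul (hpos t ht).ne'
    have h₂ : n + 1 - t ≠ 0 := right_ne_zero_of_mul (hpos t ht).ne'
    refine (((((hasDerivAt_id' t).const_add n).log h₁).sub
      (((hasDerivAt_id' t).const_sub (n + 1)).log h₂)).div_const (2 * n + 1)).congr_deriv ?_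
    field_simp
    rw [div_eq_one_iff_eq (by contrapose! h2n; linarith)]
    ring
  rw [intervalIntegral.integral_eq_sub_of_hasDerivAt hderiv
    (ContinuousOn.intervalIntegrable (ContinuousOn.inv₀ (by fun_prop) fun t ht => (hpos t ht).ne')),
    show 1 + 1 / n = (n + 1) / n by field_simp, log_div hn1 hn0]
  simp only [add_zero, sub_zero, add_sub_cancel_right]
  ring

theorem stmt_2 (n : ℝ) (hn : n < -(1 + Real.sqrt 2) / 2 ∨ n > (Real.sqrt 2 - 1) / 2) :
    ∑' k : ℕ, (2 * (2 * n + 1) ^ 2 * k + 3) / ((-(n * (n + 1))) ^ k * (Nat.choose (2 * k) k : ℝ)) =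
      -(2 * n * (n + 1) / (2 * n + 1)) * Real.log (1 + 1 / n) := by
  set p := n * (n + 1)
  have hp : 1 / 4 < p := by
    have h2 : Real.sqrt 2 ^ 2 = 2 := Real.sq_sqrt zero_le_two
    rcases hn with h | h <;> nlinarith [Real.sqrt_nonneg 2]
  have hp0 : 0 < p := by linarith
  have hx : |-p⁻¹| < 4 := by
    rw [abs_neg, abs_inv, abs_of_pos hp0, inv_lt_comm₀ hp0 four_pos]
    linarith
  have hterm (k : ℕ) : (2 * (2 * n + 1) ^ 2 * k + 3) / ((-p) ^ k * (Nat.choose (2 * k) k : ℝ)) =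
      -p * ((2 * (-p⁻¹ - 4) * k + 3 * -p⁻¹) * (-p⁻¹) ^ k / centralBinom k) := by
    rw [centralBinom_eq_two_mul_choose, ← inv_neg, inv_pow]
    field_simp
    ring
  have hint : ∫ t in (0 : ℝ)..1, (1 - -p⁻¹ * (t * (1 - t)))⁻¹ =
      p * ∫ t in (0 : ℝ)..1, ((n + t) * (n + 1 - t))⁻¹ := by
    rw [← intervalIntegral.integral_const_mul]
    refine intervalIntegral.integral_congr fun t _ => ?_
    field_simp
    ring
  rw [tsum_congr hterm, tsum_mul_left, (hasSum_centralBinom_series hx).tsum_eq, hint,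
    integral_inv_mul_add_sub hp0]
  field_simp
  ring
end

section
/- ∑_{k=0}^∞ (25k − 3)/(2^k · C(3k,k)) = π/2. -/
/-!
Beta integrals give `1 / ((3k + 1) C(3k, k)) = ∫₀¹ xᵏ (1 - x)²ᵏ`, so the `k`-th term of the series is
`∫₀¹ (25k - 3)(3k + 1) uᵏ` with `u = x (1 - x)² / 2 ∈ [0, 1/2]`. Summing under the integral
(dominated by a geometric series) leaves the integral of the rational function
`150 / (1 - u)³ - 209 / (1 - u)² + 56 / (1 - u)`, where `1 - u = (2 - x)(x² + 1) / 2`. It has the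
antiderivative `2 arctan x + (2x⁵ + 48x⁴ - 138x³ + 108x² - 20x) / ((2 - x)(x² + 1))²`, which vanishes
at `0` and equals `π / 2` at `1`.
-/

open intervalIntegral MeasureTheory Real Set

lemma add_one_mul_integral_pow_mul_one_sub_pow_succ (a b : ℕ) :
    ((a : ℝ) + 1) * ∫ x in (0:ℝ)..1, x ^ a * (1 - x) ^ (b + 1)
      = ((b : ℝ) + 1) * ∫ x in (0:ℝ)..1, x ^ (a + 1) * (1 - x) ^ b := by
  have hint (c d : ℕ) : IntervalIntegrable (fun x : ℝ => x ^ c * (1 - x) ^ d) volume 0 1 :=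
    (by fun_prop : Continuous fun x : ℝ => x ^ c * (1 - x) ^ d).intervalIntegrable 0 1
  have hderiv : ∀ x ∈ uIcc (0:ℝ) 1, HasDerivAt (fun y : ℝ => y ^ (a + 1) * (1 - y) ^ (b + 1))
      ((a + 1) * (x ^ a * (1 - x) ^ (b + 1)) - (b + 1) * (x ^ (a + 1) * (1 - x) ^ b)) x := by
    intro x _
    refine ((hasDerivAt_pow (a + 1) x).fun_mul
      (((hasDerivAt_id' x).const_sub 1).fun_pow (b + 1))).congr_deriv ?_
    simp only [Nat.add_sub_cancel]
    push_cast; ring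
  have h1 := (hint a (b + 1)).const_mul ((a : ℝ) + 1)
  have h2 := (hint (a + 1) b).const_mul ((b : ℝ) + 1)
  have := integral_eq_sub_of_hasDerivAt hderiv (h1.sub h2)
  rw [integral_sub h1 h2, intervalIntegral.integral_const_mul,
    intervalIntegral.integral_const_mul] at this
  simpa [sub_eq_zero] using this

theorem integral_pow_mul_one_sub_pow_s3 (a b : ℕ) :
    ∫ x in (0:ℝ)..1, x ^ a * (1 - x) ^ b = (((a + b + 1 : ℕ) : ℝ) * (a + b).choose a)⁻¹ := by
  induction b generalizing a with
  | zero => simp [integral_pow]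
  | succ b ih =>
    have hrec := add_one_mul_integral_pow_mul_one_sub_pow_succ a b
    have hchoose : ((a + b + 1).choose (a + 1) : ℝ) * (a + 1) = (a + b + 1).choose a * (b + 1) := by
      exact_mod_cast (Nat.choose_succ_right_eq (a + b + 1) a).trans (by congr 1; omega)
    have hpos : ((a + b + 1).choose a : ℝ) ≠ 0 :=
      Nat.cast_ne_zero.2 (Nat.choose_pos (by omega)).ne'
    have hpos' : ((a + b + 1).choose (a + 1) : ℝ) ≠ 0 :=
      Nat.cast_ne_zero.2 (Nat.choose_pos (by omega)).ne'
    rw [ih (a + 1), show a + 1 + b = a + b + 1 by ring] at hrec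
    rw [show a + (b + 1) = a + b + 1 by ring, ← mul_right_inj' (by positivity : (a : ℝ) + 1 ≠ 0), hrec]
    field_simp
    linear_combination -hchoose

lemma gosper_term_eq_integral (k : ℕ) :
    (25 * (k : ℝ) - 3) / (2 ^ k * (Nat.choose (3 * k) k : ℝ))
      = ∫ x in (0:ℝ)..1, (25 * (k : ℝ) - 3) * (3 * k + 1) * (x * (1 - x) ^ 2 / 2) ^ k := by
  have hpow (x : ℝ) :
      (x * (1 - x) ^ 2 / 2) ^ k = (2 ^ k)⁻¹ * (x ^ k * (1 - x) ^ (2 * k)) := by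
    rw [div_pow, mul_pow, pow_mul]; ring
  simp_rw [hpow, intervalIntegral.integral_const_mul, integral_pow_mul_one_sub_pow_s3]
  rw [show k + 2 * k = 3 * k by ring]
  push_cast
  field_simp

lemma hasSum_gosper_series {𝕜 : Type*} [NormedField 𝕜] {u : 𝕜} (hu : ‖u‖ < 1) :
    HasSum (fun k : ℕ => (25 * (k : 𝕜) - 3) * (3 * k + 1) * u ^ k)
      (150 / (1 - u) ^ 3 - 209 / (1 - u) ^ 2 + 56 / (1 - u)) := by
  -- `(25k - 3)(3k + 1) = 150 C(k + 2, 2) - 209 C(k + 1, 1) + 56 C(k, 0)`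
  have h2 := (hasSum_choose_mul_geometric_of_norm_lt_one 2 hu).mul_left 150
  have h1 := (hasSum_choose_mul_geometric_of_norm_lt_one 1 hu).mul_left 209
  have h0 := (hasSum_choose_mul_geometric_of_norm_lt_one 0 hu).mul_left 56
  rw [show 150 / (1 - u) ^ 3 - 209 / (1 - u) ^ 2 + 56 / (1 - u)
      = 150 * (1 / (1 - u) ^ (2 + 1)) - 209 * (1 / (1 - u) ^ (1 + 1)) + 56 * (1 / (1 - u) ^ (0 + 1))
      by ring]
  refine ((h2.sub h1).add h0).congr_fun fun k => ?_
  have hchoose : ((k + 2).choose 2 : 𝕜) * 2 = (k + 2) * (k + 1) := by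
    have := congrArg (Nat.cast (R := 𝕜)) <|
      (Nat.add_one_mul_choose_eq (k + 1) 1).symm.trans (by rw [Nat.choose_one_right])
    push_cast at this
    linear_combination this
  simp only [Nat.choose_one_right, Nat.choose_zero_right]
  push_cast
  linear_combination (-75 * u ^ k) * hchoose

theorem hasSum_intervalIntegral_mul_pow {c : ℕ → ℝ} {φ f : ℝ → ℝ} {a b r : ℝ}
    (hφ : Continuous φ) (hc : Summable fun k => |c k| * r ^ k)
    (hφr : ∀ x ∈ uIcc a b, |φ x| ≤ r)
    (hf : ∀ x ∈ uIcc a b, HasSum (fun k => c k * φ x ^ k) (f x)) :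
    HasSum (fun k => ∫ x in a..b, c k * φ x ^ k) (∫ x in a..b, f x) := by
  refine hasSum_integral_of_dominated_convergence (fun k _ => |c k| * r ^ k)
    (fun k => (by fun_prop : Continuous fun x => c k * φ x ^ k).aestronglyMeasurable)
    (fun k => ae_of_all _ fun x hx => ?_) (ae_of_all _ fun _ _ => hc) intervalIntegrable_const
    (ae_of_all _ fun x hx => hf x (uIoc_subset_uIcc hx))
  rw [norm_mul, norm_pow, Real.norm_eq_abs, Real.norm_eq_abs]
  gcongr
  exact hφr x (uIoc_subset_uIcc hx)

lemma abs_mul_one_sub_sq_div_two_le {x : ℝ} (hx : x ∈ uIcc 0 1) :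
    |x * (1 - x) ^ 2 / 2| ≤ 1 / 2 := by
  rw [uIcc_of_le zero_le_one] at hx
  have h0 : 0 ≤ x * (1 - x) ^ 2 := mul_nonneg hx.1 (sq_nonneg _)
  have h1 : (1 - x) ^ 2 ≤ 1 := by nlinarith [hx.1, hx.2]
  rw [abs_of_nonneg (div_nonneg h0 zero_le_two)]
  nlinarith [mul_le_mul hx.2 h1 (sq_nonneg (1 - x)) zero_le_one]

lemma hasDerivAt_gosper_antiderivative {x : ℝ} (hx : x ≠ 2) :
    HasDerivAt
      (fun x => 2 * arctan x + (2 * x ^ 5 + 48 * x ^ 4 - 138 * x ^ 3 + 108 * x ^ 2 - 20 * x)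
        / ((2 - x) * (x ^ 2 + 1)) ^ 2)
      (150 / (1 - x * (1 - x) ^ 2 / 2) ^ 3 - 209 / (1 - x * (1 - x) ^ 2 / 2) ^ 2
        + 56 / (1 - x * (1 - x) ^ 2 / 2)) x := by
  have h2x : 2 - x ≠ 0 := sub_ne_zero.2 hx.symm
  have hQ : (2 - x) * (x ^ 2 + 1) ≠ 0 := mul_ne_zero h2x (by positivity)
  have hP : HasDerivAt (fun x => 2 * x ^ 5 + 48 * x ^ 4 - 138 * x ^ 3 + 108 * x ^ 2 - 20 * x)
      (10 * x ^ 4 + 192 * x ^ 3 - 414 * x ^ 2 + 216 * x - 20) x := by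
    refine (((((hasDerivAt_pow 5 x).const_mul 2).add ((hasDerivAt_pow 4 x).const_mul 48)).sub
      ((hasDerivAt_pow 3 x).const_mul 138)).add ((hasDerivAt_pow 2 x).const_mul 108)).sub
      ((hasDerivAt_id' x).const_mul 20) |>.congr_deriv ?_
    norm_num; ring
  have hQ' := (((hasDerivAt_id' x).const_sub 2).fun_mul ((hasDerivAt_pow 2 x).add_const 1)).fun_pow 2
  refine (((hasDerivAt_arctan x).const_mul 2).add (hP.div hQ' (pow_ne_zero 2 hQ))).congr_deriv ?_
  rw [show 1 - x * (1 - x) ^ 2 / 2 = (2 - x) * (x ^ 2 + 1) / 2 by ring]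
  field_simp
  norm_num
  ring

lemma integral_gosper_rational :
    ∫ x in (0:ℝ)..1, (150 / (1 - x * (1 - x) ^ 2 / 2) ^ 3 - 209 / (1 - x * (1 - x) ^ 2 / 2) ^ 2
      + 56 / (1 - x * (1 - x) ^ 2 / 2)) = π / 2 := by
  have hcont : ContinuousOn (fun x : ℝ => 150 / (1 - x * (1 - x) ^ 2 / 2) ^ 3
      - 209 / (1 - x * (1 - x) ^ 2 / 2) ^ 2 + 56 / (1 - x * (1 - x) ^ 2 / 2)) (uIcc 0 1) := by
    intro x hx
    have := (abs_le.1 (abs_mul_one_sub_sq_div_two_le hx)).2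
    have hne : 1 - x * (1 - x) ^ 2 / 2 ≠ 0 := by linarith
    exact ContinuousAt.continuousWithinAt (by fun_prop (disch := simp [hne]))
  have hderiv (x : ℝ) (hx : x ∈ uIcc (0:ℝ) 1) := hasDerivAt_gosper_antiderivative (x := x) (by
    rw [uIcc_of_le zero_le_one] at hx
    linarith [hx.2])
  rw [integral_eq_sub_of_hasDerivAt hderiv hcont.intervalIntegrable]
  norm_num [arctan_one]
  ring

theorem stmt_3 :
    ∑' k : ℕ, (25 * (k : ℝ) - 3) / (2 ^ k * (Nat.choose (3 * k) k : ℝ)) = Real.pi / 2 := by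
  have hc : Summable fun k : ℕ => |(25 * (k : ℝ) - 3) * (3 * k + 1)| * (1 / 2) ^ k := by
    simpa [abs_mul] using (hasSum_gosper_series (u := (1 / 2 : ℝ)) (by norm_num)).summable.abs
  have hsum := hasSum_intervalIntegral_mul_pow (by fun_prop) hc
    (fun _ => abs_mul_one_sub_sq_div_two_le) fun x hx => hasSum_gosper_series
      ((Real.norm_eq_abs _).trans_lt ((abs_mul_one_sub_sq_div_two_le hx).trans_lt (by norm_num)))
  simp_rw [gosper_term_eq_integral, hsum.tsum_eq, integral_gosper_rational]
end

section
/- Let −3 < x < 1. Define α = arctan((x−1)/√((1−x)(3+x))) and β = arctan((x+1)/√((1−x)(3+x))). Then α + β equals arctan((x/(x+2))·√((3+x)/(1−x))) if −2 < x < 1; equals −π/2 if x = −2; and equals arctan((x/(x+2))·√((3+x)/(1−x))) − π if −3 < x < −2. -/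
/-!
With `s = √((1 - x)(3 + x))`, `a = (x - 1)/s` and `b = (x + 1)/s` one computes
`1 - a b = 2 (x + 2)(1 - x)/s²` and `(a + b)/(1 - a b) = x/(x + 2) · s/(1 - x)`, and
`s/(1 - x) = √((3 + x)/(1 - x))`. So the sign of `x + 2` decides whether `a b < 1`, `a b = 1` or
`a b > 1`, i.e. which branch of the arctangent addition formula applies; when `a b = 1` we have
`b = a⁻¹` with `a < 0`, and `arctan a + arctan a⁻¹ = -π/2`.
-/

open Real

lemma Real.sqrt_div_eq_sqrt_mul_div {u : ℝ} (hu : 0 ≤ u) (v : ℝ) :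
    √(v / u) = √(u * v) / u := by
  rcases hu.eq_or_lt with rfl | hu
  · simp
  rw [← Real.sqrt_sq hu.le, ← Real.sqrt_div' _ (sq_nonneg u), Real.sqrt_sq hu.le]
  congr 1
  field_simp

namespace ArctanSum

variable {x s : ℝ}

lemma one_sub_mul_eq (hs : s ^ 2 = (1 - x) * (3 + x)) (hs0 : s ≠ 0) :
    1 - (x - 1) / s * ((x + 1) / s) = 2 * (x + 2) * (1 - x) / s ^ 2 := by
  field_simp
  linear_combination hs

lemma add_div_one_sub_mul_eq (hs : s ^ 2 = (1 - x) * (3 + x)) (hs0 : s ≠ 0) (hx1 : x ≠ 1)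
    (hx2 : x + 2 ≠ 0) :
    ((x - 1) / s + (x + 1) / s) / (1 - (x - 1) / s * ((x + 1) / s)) =
      x / (x + 2) * (s / (1 - x)) := by
  have h1 : 1 - x ≠ 0 := sub_ne_zero.mpr hx1.symm
  rw [one_sub_mul_eq hs hs0]
  field_simp
  ring

end ArctanSum

theorem stmt_8 (x : ℝ) (hx1 : -3 < x) (hx2 : x < 1) :
    (-2 < x →
      Real.arctan ((x - 1) / Real.sqrt ((1 - x) * (3 + x))) +
        Real.arctan ((x + 1) / Real.sqrt ((1 - x) * (3 + x))) =
          Real.arctan ((x / (x + 2)) * Real.sqrt ((3 + x) / (1 - x)))) ∧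
    (x = -2 →
      Real.arctan ((x - 1) / Real.sqrt ((1 - x) * (3 + x))) +
        Real.arctan ((x + 1) / Real.sqrt ((1 - x) * (3 + x))) = -(Real.pi / 2)) ∧
    (x < -2 →
      Real.arctan ((x - 1) / Real.sqrt ((1 - x) * (3 + x))) +
        Real.arctan ((x + 1) / Real.sqrt ((1 - x) * (3 + x))) =
          Real.arctan ((x / (x + 2)) * Real.sqrt ((3 + x) / (1 - x))) - Real.pi) := by
  have h1 : 0 < 1 - x := by linarith
  rw [Real.sqrt_div_eq_sqrt_mul_div h1.le]
  set s := √((1 - x) * (3 + x))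
  have hs : s ^ 2 = (1 - x) * (3 + x) := Real.sq_sqrt (by nlinarith)
  have hs0 : 0 < s := Real.sqrt_pos.mpr (by nlinarith)
  have hmul := ArctanSum.one_sub_mul_eq hs hs0.ne'
  have ha : (x - 1) / s < 0 := div_neg_of_neg_of_pos (by linarith) hs0
  refine ⟨fun hx => ?_, fun hx => ?_, fun hx => ?_⟩
  · have hlt : (x - 1) / s * ((x + 1) / s) < 1 := by
      have : 0 < 2 * (x + 2) * (1 - x) / s ^ 2 := by apply div_pos <;> nlinarith
      linarith
    rw [arctan_add hlt, ArctanSum.add_div_one_sub_mul_eq hs hs0.ne' hx2.ne (by linarith)]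
  · rw [show x + 2 = 0 by linarith, mul_zero, zero_mul, zero_div, sub_eq_zero] at hmul
    have hinv : (x + 1) / s = ((x - 1) / s)⁻¹ := eq_inv_of_mul_eq_one_right hmul.symm
    rw [hinv, arctan_inv_of_neg ha]
    ring
  · have hgt : 1 < (x - 1) / s * ((x + 1) / s) := by
      have : 2 * (x + 2) * (1 - x) / s ^ 2 < 0 := by apply div_neg_of_neg_of_pos <;> nlinarith
      linarith
    rw [arctan_add_eq_sub_pi hgt ha,
      ArctanSum.add_div_one_sub_mul_eq hs hs0.ne' hx2.ne (by linarith)]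
end

section
/- For every real u with u < 1 and u ≠ 0, ∑_{k=0}^∞ (u^k/(2k+1)) · ( (1 − i√(1−u))^{−2k−1} + (1 + i√(1−u))^{−2k−1} ) = arctanh(√u)/√u, where for u < 0 both sides are interpreted via the principal complex square root and the identity is an equality of complex numbers. -/
/-!
Put `t = √u`, `s = √(1 - u)`, `a = t / (1 - i s)` and `b = t / (1 + i s)`. Then the `k`-th term
of the series is `(a ^ (2k+1) + b ^ (2k+1)) / ((2k+1) t)`, and `a`, `b` lie in the unit disc because
`|t|² = |u| < 2 - u = |1 ± i s|²`, so the series sums to `(artanh a + artanh b) / t`. Since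
`1 + a b = 2 / (2 - u)` is a positive real, the logarithms in the addition formula
`artanh a + artanh b = artanh ((a + b) / (1 + a b))` need no branch correction, and
`(a + b) / (1 + a b) = t`.
-/

open Complex

namespace Complex

noncomputable def artanh (z : ℂ) : ℂ := (log (1 + z) - log (1 - z)) / 2

theorem hasSum_artanh {z : ℂ} (hz : ‖z‖ < 1) :
    HasSum (fun k : ℕ => z ^ (2 * k + 1) / (2 * k + 1)) (artanh z) := by
  have h := ((hasSum_taylorSeries_neg_log hz).sub
    (hasSum_taylorSeries_neg_log (z := -z) (by rwa [norm_neg]))).div_const 2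
  have hodd : Function.Injective (fun k : ℕ => 2 * k + 1) := fun a b h => by simpa using h
  have hterm : (fun k : ℕ => z ^ (2 * k + 1) / (2 * k + 1)) =
      (fun n : ℕ => (z ^ n / n - (-z) ^ n / n) / 2) ∘ (fun k => 2 * k + 1) := by
    funext k
    simp only [Function.comp_apply, Nat.cast_add, Nat.cast_mul, Nat.cast_ofNat, Nat.cast_one,
      Odd.neg_pow ⟨k, rfl⟩ z]
    ring
  have hval : artanh z = (-log (1 - z) - -log (1 - -z)) / 2 := by
    unfold artanh
    rw [sub_neg_eq_add 1 z]
    ring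
  rw [hterm, hval, hodd.hasSum_iff]
  · exact h
  · intro n hn
    obtain ⟨m, rfl⟩ : Even n := Nat.not_odd_iff_even.mp fun ⟨m, hm⟩ => hn ⟨m, hm.symm⟩
    simp [Even.neg_pow ⟨m, rfl⟩]

theorem log_one_add_mul_one_add {a b : ℂ} (ha : ‖a‖ < 1) (hb : ‖b‖ < 1) :
    log ((1 + a) * (1 + b)) = log (1 + a) + log (1 + b) := by
  refine log_mul (slitPlane_ne_zero (mem_slitPlane_of_norm_lt_one ha))
    (slitPlane_ne_zero (mem_slitPlane_of_norm_lt_one hb)) ?_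
  have h₁ := arg_one_add_mem_Ioo ha
  have h₂ := arg_one_add_mem_Ioo hb
  constructor <;> linarith [h₁.1, h₁.2, h₂.1, h₂.2]

theorem artanh_add_artanh {a b : ℂ} (ha : ‖a‖ < 1) (hb : ‖b‖ < 1) {c : ℝ} (hc : 0 < c)
    (hab : 1 + a * b = c) : artanh a + artanh b = artanh ((a + b) / (1 + a * b)) := by
  set T := (a + b) / (1 + a * b)
  have hc0 : (c : ℂ) ≠ 0 := ofReal_ne_zero.mpr hc.ne'
  have hplus : (1 + a) * (1 + b) = c * (1 + T) := by
    simp only [T, hab]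
    field_simp
    linear_combination hab
  have hminus : (1 + -a) * (1 + -b) = c * (1 - T) := by
    simp only [T, hab]
    field_simp
    linear_combination hab
  have hne : ∀ x : ℂ, ‖x‖ < 1 → 1 + x ≠ 0 := fun x hx =>
    slitPlane_ne_zero (mem_slitPlane_of_norm_lt_one hx)
  have hplus0 : 1 + T ≠ 0 := right_ne_zero_of_mul (hplus ▸ mul_ne_zero (hne a ha) (hne b hb))
  have hminus0 : 1 - T ≠ 0 := right_ne_zero_of_mul
    (hminus ▸ mul_ne_zero (hne (-a) (by rwa [norm_neg])) (hne (-b) (by rwa [norm_neg])))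
  have hlog_plus := log_one_add_mul_one_add ha hb
  have hlog_minus := log_one_add_mul_one_add (a := -a) (b := -b) (by rwa [norm_neg])
    (by rwa [norm_neg])
  rw [hplus, log_ofReal_mul hc hplus0] at hlog_plus
  rw [hminus, log_ofReal_mul hc hminus0] at hlog_minus
  simp only [artanh, ← sub_eq_add_neg] at hlog_minus ⊢
  linear_combination hlog_minus / 2 - hlog_plus / 2

theorem norm_div_one_add_I_mul_lt_one {u s : ℝ} (hu : u < 1) {t : ℂ} (ht : t ^ 2 = u)
    (hs : s ^ 2 = 1 - u) : ‖t / (1 + I * s)‖ < 1 := by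
  have hw : ‖1 + I * s‖ ^ 2 = 2 - u := by
    simp only [Complex.sq_norm, normSq_apply, add_re, one_re, mul_re, I_re, ofReal_re, zero_mul,
      I_im, ofReal_im, mul_zero, sub_self, add_zero, mul_one, add_im, one_im, mul_im, one_mul,
      zero_add]
    linear_combination hs
  have htn : ‖t‖ ^ 2 = |u| := by rw [← norm_pow, ht, norm_real, Real.norm_eq_abs]
  have hlt : ‖t‖ < ‖1 + I * s‖ :=
    lt_of_pow_lt_pow_left₀ 2 (norm_nonneg _) (by rw [htn, hw]; cases abs_cases u <;> linarith)
  rw [norm_div]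
  exact (div_lt_one ((norm_nonneg t).trans_lt hlt)).mpr hlt

theorem norm_div_one_sub_I_mul_lt_one {u s : ℝ} (hu : u < 1) {t : ℂ} (ht : t ^ 2 = u)
    (hs : s ^ 2 = 1 - u) : ‖t / (1 - I * s)‖ < 1 := by
  simpa [sub_eq_add_neg] using norm_div_one_add_I_mul_lt_one (s := -s) hu ht (by rwa [neg_sq])

theorem artanh_div_add_artanh_div {u s : ℝ} (hu : u < 1) {t : ℂ} (ht : t ^ 2 = u)
    (hs : s ^ 2 = 1 - u) :
    artanh (t / (1 - I * s)) + artanh (t / (1 + I * s)) = artanh t := by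
  have hw : (1 - I * s) * (1 + I * s) = 2 - u := by
    have hsC : (s : ℂ) ^ 2 = 1 - u := by exact_mod_cast hs
    linear_combination (-(s : ℂ) ^ 2) * I_sq + hsC
  have h2u : (2 : ℝ) - u ≠ 0 := by linarith
  have h2uC : (2 - u : ℂ) ≠ 0 := by exact_mod_cast h2u
  have hw₁ : 1 - I * s ≠ 0 := left_ne_zero_of_mul (hw ▸ h2uC)
  have hw₂ : 1 + I * s ≠ 0 := right_ne_zero_of_mul (hw ▸ h2uC)
  have hprod : 1 + t / (1 - I * s) * (t / (1 + I * s)) = ((2 / (2 - u) : ℝ) : ℂ) := by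
    rw [div_mul_div_comm, ← sq, ht, hw]
    push_cast
    field_simp
    ring
  have hsum : (t / (1 - I * s) + t / (1 + I * s)) / (1 + t / (1 - I * s) * (t / (1 + I * s))) =
      t := by
    rw [hprod, div_add_div _ _ hw₁ hw₂, hw]
    push_cast
    field_simp
    ring
  rw [artanh_add_artanh (norm_div_one_sub_I_mul_lt_one hu ht hs)
    (norm_div_one_add_I_mul_lt_one hu ht hs) (by apply div_pos <;> linarith) hprod, hsum]

end Complex

theorem stmt_17 (u : ℝ) (hu1 : u < 1) (hu2 : u ≠ 0) :
    ∑' k : ℕ,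
        ((u : ℂ) ^ k / (2 * (k : ℂ) + 1)) *
          ((1 - Complex.I * ((1 - u : ℂ) ^ ((1 : ℂ) / 2))) ^ (-(2 * (k : ℤ) + 1)) +
            (1 + Complex.I * ((1 - u : ℂ) ^ ((1 : ℂ) / 2))) ^ (-(2 * (k : ℤ) + 1))) =
      ((Complex.log (1 + (u : ℂ) ^ ((1 : ℂ) / 2)) -
          Complex.log (1 - (u : ℂ) ^ ((1 : ℂ) / 2))) / 2) / (u : ℂ) ^ ((1 : ℂ) / 2) := by
  set t : ℂ := (u : ℂ) ^ ((1 : ℂ) / 2)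
  have ht : t ^ 2 = u := by
    simpa only [t, Nat.cast_ofNat, one_div] using cpow_nat_inv_pow (u : ℂ) two_ne_zero
  have ht0 : t ≠ 0 := by
    rintro h
    exact hu2 (by exact_mod_cast (by rw [← ht, h]; ring : (u : ℂ) = 0))
  have hsC : (1 - u : ℂ) ^ ((1 : ℂ) / 2) = Real.sqrt (1 - u) := by
    rw [Real.sqrt_eq_rpow, ofReal_cpow (by linarith)]
    push_cast
    rfl
  set s := Real.sqrt (1 - u)
  have hs : s ^ 2 = 1 - u := Real.sq_sqrt (by linarith)
  have hterm (w : ℂ) (k : ℕ) : (u : ℂ) ^ k / (2 * k + 1) * w ^ (-(2 * (k : ℤ) + 1)) =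
      (t / w) ^ (2 * k + 1) / (2 * k + 1) / t := by
    rw [← ht, div_pow, zpow_neg, show 2 * (k : ℤ) + 1 = (2 * k + 1 : ℕ) by push_cast; ring,
      zpow_natCast]
    field_simp
    ring
  have hsum := ((hasSum_artanh (norm_div_one_sub_I_mul_lt_one hu1 ht hs)).add
    (hasSum_artanh (norm_div_one_add_I_mul_lt_one hu1 ht hs))).div_const t
  rw [artanh_div_add_artanh_div hu1 ht hs] at hsum
  simp only [add_div] at hsum
  simp_rw [hsC, mul_add, hterm]
  exact hsum.tsum_eq
end

section
/- For every real number x and every positive integer n, ∑_{k=1}^n (2(x−16)k² + (x+32)k − x − 6)·x^k/((2k−1)·C(4k,2k)) = −x + (n+1)·x^{n+1}/C(4n,2n). -/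
theorem Nat.succ_succ_mul_succ_mul_centralBinom_add_two (m : ℕ) :
    (m + 2) * (m + 1) * centralBinom (m + 2) = 4 * (2 * m + 1) * (2 * m + 3) * centralBinom m := by
  have h₁ := succ_mul_centralBinom_succ (m + 1)
  have h₀ := succ_mul_centralBinom_succ m
  calc (m + 2) * (m + 1) * centralBinom (m + 2)
      = (m + 1) * (2 * (2 * (m + 1) + 1) * centralBinom (m + 1)) := by rw [← h₁]; ring
    _ = 2 * (2 * m + 3) * ((m + 1) * centralBinom (m + 1)) := by ring
    _ = 4 * (2 * m + 1) * (2 * m + 3) * centralBinom m := by rw [h₀]; ring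

theorem Nat.choose_four_mul_add_four (k : ℕ) :
    (k + 1) * (2 * k + 1) * choose (4 * (k + 1)) (2 * (k + 1)) =
      2 * (4 * k + 1) * (4 * k + 3) * choose (4 * k) (2 * k) := by
  have h := succ_succ_mul_succ_mul_centralBinom_add_two (2 * k)
  rw [centralBinom, centralBinom, show 2 * (2 * k + 2) = 4 * (k + 1) by ring,
    show 2 * k + 2 = 2 * (k + 1) by ring, show 2 * (2 * k) = 4 * k by ring] at h
  apply Nat.eq_of_mul_eq_mul_left two_pos
  linear_combination h

/-- The summand is the difference `F (k + 1) - F k` of `F k = (k + 1) x ^ (k + 1) / C(4k, 2k)`. -/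
theorem summand_succ_eq_sub (x : ℝ) (k : ℕ) :
    (2 * (x - 16) * ((k + 1 : ℕ) : ℝ) ^ 2 + (x + 32) * ((k + 1 : ℕ) : ℝ) - x - 6) * x ^ (k + 1) /
        ((2 * ((k + 1 : ℕ) : ℝ) - 1) * (Nat.choose (4 * (k + 1)) (2 * (k + 1)) : ℝ)) =
      (((k + 1 : ℕ) : ℝ) + 1) * x ^ (k + 1 + 1) / (Nat.choose (4 * (k + 1)) (2 * (k + 1)) : ℝ) -
        ((k : ℝ) + 1) * x ^ (k + 1) / (Nat.choose (4 * k) (2 * k) : ℝ) := by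
  have hrec : ((k : ℝ) + 1) * (2 * k + 1) * (Nat.choose (4 * (k + 1)) (2 * (k + 1)) : ℝ) =
      2 * (4 * k + 1) * (4 * k + 3) * (Nat.choose (4 * k) (2 * k) : ℝ) := by
    exact_mod_cast Nat.choose_four_mul_add_four k
  have hc : (Nat.choose (4 * k) (2 * k) : ℝ) ≠ 0 := by
    exact_mod_cast (Nat.choose_pos (by omega)).ne'
  have hc' : (Nat.choose (4 * (k + 1)) (2 * (k + 1)) : ℝ) ≠ 0 := by
    exact_mod_cast (Nat.choose_pos (by omega)).ne'
  have hk : (2 * ((k + 1 : ℕ) : ℝ) - 1) ≠ 0 := by push_cast; ring_nf; positivity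
  rw [div_sub_div _ _ hc' hc, div_eq_div_iff (mul_ne_zero hk hc') (mul_ne_zero hc' hc)]
  push_cast
  linear_combination (x ^ (k + 1) * (Nat.choose (4 * (k + 1)) (2 * (k + 1)) : ℝ)) * hrec

theorem stmt_19_general (x : ℝ) (n : ℕ) :
    ∑ k ∈ Finset.Icc 1 n,
        (2 * (x - 16) * (k : ℝ) ^ 2 + (x + 32) * k - x - 6) * x ^ k /
          ((2 * (k : ℝ) - 1) * (Nat.choose (4 * k) (2 * k) : ℝ)) =
      -x + ((n : ℝ) + 1) * x ^ (n + 1) / (Nat.choose (4 * n) (2 * n) : ℝ) := by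
  induction n with
  | zero => simp
  | succ m ih =>
    rw [Finset.sum_Icc_succ_top (by omega), ih, summand_succ_eq_sub]
    ring

theorem stmt_19 (x : ℝ) (n : ℕ) (hn : 0 < n) :
    ∑ k ∈ Finset.Icc 1 n,
        (2 * (x - 16) * (k : ℝ) ^ 2 + (x + 32) * k - x - 6) * x ^ k /
          ((2 * (k : ℝ) - 1) * (Nat.choose (4 * k) (2 * k) : ℝ)) =
      -x + ((n : ℝ) + 1) * x ^ (n + 1) / (Nat.choose (4 * n) (2 * n) : ℝ) :=
  stmt_19_general x n
end
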